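/- The largest eigenvalue μ of the Laplacian matrix of the graph G strictly exceeds max over all pairs of adjacent vertices v ~ j of 2 + √(2·(m_v² + m_j²) + (d_v − d_j)² − 4·(d_v + d_j) + 4). (This gives a counterexample to conjectured bound 49 of Brankov, Hansen and Stevanović.) -/

import Mathlib

set_option maxRecDepth 40000


/-- The edge list of the graph. -/
def edgeList : List (Fin 12 × Fin 12) :=
  [(0,3),(0,4),(0,8),(1,2),(1,3),(1,8),(1,10),(2,5),(2,7),(2,11),(3,7),(3,11),(4,6),(4,7),(5,8),(5,9),(6,9),(6,10),(7,10),(9,11),(10,11)]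

/-- The graph under consideration. -/
def G : SimpleGraph (Fin 12) where
  Adj v w := (v, w) ∈ edgeList ∨ (w, v) ∈ edgeList
  symm := ⟨fun _ _ h => h.symm⟩
  loopless := ⟨by intro v; fin_cases v <;> decide⟩

instance : DecidableRel G.Adj :=
  fun v w => inferInstanceAs (Decidable ((v, w) ∈ edgeList ∨ (w, v) ∈ edgeList))

/-- `d v` is the degree of the vertex `v`, as a real number. -/
noncomputable def d (v : Fin 12) : ℝ := G.degree v

/-- `m v` is the average of the degrees of the neighbours of `v`. -/
noncomputable def m (v : Fin 12) : ℝ :=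
  (∑ u ∈ G.neighborFinset v, (G.degree u : ℝ)) / d v

open Matrix in
noncomputable def evec : Fin 12 → ℝ := fun i =>
  if i.val = 0 then Real.sqrt 2 - 1 else 
    if i.val = 1 then 1 else if i.val = 2 then -1 else if i.val = 3 then -1 else 
    if i.val = 4 then 1 - Real.sqrt 2 else if i.val = 5 then Real.sqrt 2 - 1 else if i.val = 6 then Real.sqrt 2 - 1 else 
    if i.val = 7 then 1 else if i.val = 8 then 1 - Real.sqrt 2 else if i.val = 9 then 1 - Real.sqrt 2 else 
    if i.val = 10 then -1 else 1

open Matrix in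
lemma eigen_eq : ((6 + Real.sqrt 2) • (1 : Matrix (Fin 12) (Fin 12) ℝ) - G.lapMatrix ℝ).mulVec evec = 0 := by
  have hs : Real.sqrt 2 ^ 2 = 2 := Real.sq_sqrt (by norm_num)
  have expand : ∀ i : Fin 12, (((6+Real.sqrt 2) • (1:Matrix (Fin 12) (Fin 12) ℝ) - G.lapMatrix ℝ) *ᵥ evec) i
      = (6+Real.sqrt 2) * evec i - ((G.degree i : ℝ) * evec i - ∑ u ∈ G.neighborFinset i, evec u) := by
    intro i
    rw [Matrix.sub_mulVec, Pi.sub_apply, Matrix.smul_mulVec, Matrix.one_mulVec,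
      SimpleGraph.lapMatrix_mulVec_apply]
    rfl
  funext i
  fin_cases i
  · show (((6+Real.sqrt 2) • (1:Matrix (Fin 12) (Fin 12) ℝ) - G.lapMatrix ℝ) *ᵥ evec) (0:Fin 12) = 0
    rw [expand, show G.neighborFinset (0:Fin 12) = {3,4,8} from by decide,
      show G.degree (0:Fin 12) = 3 from by decide]
    simp (config := { decide := true }) [evec, Finset.sum_insert, Finset.mem_insert]
    nlinarith [hs]
  · show (((6+Real.sqrt 2) • (1:Matrix (Fin 12) (Fin 12) ℝ) - G.lapMatrix ℝ) *ᵥ evec) (1:Fin 12) = 0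
    rw [expand, show G.neighborFinset (1:Fin 12) = {2,3,8,10} from by decide,
      show G.degree (1:Fin 12) = 4 from by decide]
    simp (config := { decide := true }) [evec, Finset.sum_insert, Finset.mem_insert]
    nlinarith [hs]
  · show (((6+Real.sqrt 2) • (1:Matrix (Fin 12) (Fin 12) ℝ) - G.lapMatrix ℝ) *ᵥ evec) (2:Fin 12) = 0
    rw [expand, show G.neighborFinset (2:Fin 12) = {1,5,7,11} from by decide,
      show G.degree (2:Fin 12) = 4 from by decide]
    simp (config := { decide := true }) [evec, Finset.sum_insert, Finset.mem_insert]
    nlinarith [hs]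
  · show (((6+Real.sqrt 2) • (1:Matrix (Fin 12) (Fin 12) ℝ) - G.lapMatrix ℝ) *ᵥ evec) (3:Fin 12) = 0
    rw [expand, show G.neighborFinset (3:Fin 12) = {0,1,7,11} from by decide,
      show G.degree (3:Fin 12) = 4 from by decide]
    simp (config := { decide := true }) [evec, Finset.sum_insert, Finset.mem_insert]
    nlinarith [hs]
  · show (((6+Real.sqrt 2) • (1:Matrix (Fin 12) (Fin 12) ℝ) - G.lapMatrix ℝ) *ᵥ evec) (4:Fin 12) = 0
    rw [expand, show G.neighborFinset (4:Fin 12) = {0,6,7} from by decide,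
      show G.degree (4:Fin 12) = 3 from by decide]
    simp (config := { decide := true }) [evec, Finset.sum_insert, Finset.mem_insert]
    nlinarith [hs]
  · show (((6+Real.sqrt 2) • (1:Matrix (Fin 12) (Fin 12) ℝ) - G.lapMatrix ℝ) *ᵥ evec) (5:Fin 12) = 0
    rw [expand, show G.neighborFinset (5:Fin 12) = {2,8,9} from by decide,
      show G.degree (5:Fin 12) = 3 from by decide]
    simp (config := { decide := true }) [evec, Finset.sum_insert, Finset.mem_insert]
    nlinarith [hs]
  · show (((6+Real.sqrt 2) • (1:Matrix (Fin 12) (Fin 12) ℝ) - G.lapMatrix ℝ) *ᵥ evec) (6:Fin 12) = 0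
    rw [expand, show G.neighborFinset (6:Fin 12) = {4,9,10} from by decide,
      show G.degree (6:Fin 12) = 3 from by decide]
    simp (config := { decide := true }) [evec, Finset.sum_insert, Finset.mem_insert]
    nlinarith [hs]
  · show (((6+Real.sqrt 2) • (1:Matrix (Fin 12) (Fin 12) ℝ) - G.lapMatrix ℝ) *ᵥ evec) (7:Fin 12) = 0
    rw [expand, show G.neighborFinset (7:Fin 12) = {2,3,4,10} from by decide,
      show G.degree (7:Fin 12) = 4 from by decide]
    simp (config := { decide := true }) [evec, Finset.sum_insert, Finset.mem_insert]
    nlinarith [hs]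
  · show (((6+Real.sqrt 2) • (1:Matrix (Fin 12) (Fin 12) ℝ) - G.lapMatrix ℝ) *ᵥ evec) (8:Fin 12) = 0
    rw [expand, show G.neighborFinset (8:Fin 12) = {0,1,5} from by decide,
      show G.degree (8:Fin 12) = 3 from by decide]
    simp (config := { decide := true }) [evec, Finset.sum_insert, Finset.mem_insert]
    nlinarith [hs]
  · show (((6+Real.sqrt 2) • (1:Matrix (Fin 12) (Fin 12) ℝ) - G.lapMatrix ℝ) *ᵥ evec) (9:Fin 12) = 0
    rw [expand, show G.neighborFinset (9:Fin 12) = {5,6,11} from by decide,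
      show G.degree (9:Fin 12) = 3 from by decide]
    simp (config := { decide := true }) [evec, Finset.sum_insert, Finset.mem_insert]
    nlinarith [hs]
  · show (((6+Real.sqrt 2) • (1:Matrix (Fin 12) (Fin 12) ℝ) - G.lapMatrix ℝ) *ᵥ evec) (10:Fin 12) = 0
    rw [expand, show G.neighborFinset (10:Fin 12) = {1,6,7,11} from by decide,
      show G.degree (10:Fin 12) = 4 from by decide]
    simp (config := { decide := true }) [evec, Finset.sum_insert, Finset.mem_insert]
    nlinarith [hs]
  · show (((6+Real.sqrt 2) • (1:Matrix (Fin 12) (Fin 12) ℝ) - G.lapMatrix ℝ) *ᵥ evec) (11:Fin 12) = 0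
    rw [expand, show G.neighborFinset (11:Fin 12) = {2,3,9,10} from by decide,
      show G.degree (11:Fin 12) = 4 from by decide]
    simp (config := { decide := true }) [evec, Finset.sum_insert, Finset.mem_insert]
    nlinarith [hs]



lemma mem_spec_of_mulVec {n : Type*} [Fintype n] [DecidableEq n] (A : Matrix n n ℝ) (r : ℝ)
    (v : n → ℝ) (hv : v ≠ 0) (h : (r • (1 : Matrix n n ℝ) - A).mulVec v = 0) :
    r ∈ spectrum ℝ A := by
  rw [spectrum.mem_iff]
  intro hu
  rw [Algebra.algebraMap_eq_smul_one, Matrix.isUnit_iff_isUnit_det] at hu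
  exact hu.ne_zero (Matrix.exists_mulVec_eq_zero_iff.mp ⟨v, hv, h⟩)

lemma spec_mem : (6 + Real.sqrt 2) ∈ spectrum ℝ (G.lapMatrix ℝ) := by
  refine mem_spec_of_mulVec _ _ evec ?_ eigen_eq
  intro hz
  have := congrFun hz 1
  simp (config := { decide := true }) [evec] at this

lemma dm_vals : ∀ v : Fin 12, (d v = 3 ∧ m v = 10/3) ∨ (d v = 4 ∧ m v = 15/4) := by
  have key : ∀ v : Fin 12,
      (G.degree v = 3 ∧ (∑ u ∈ G.neighborFinset v, G.degree u) = 10) ∨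
      (G.degree v = 4 ∧ (∑ u ∈ G.neighborFinset v, G.degree u) = 15) := by decide
  intro v
  rcases key v with ⟨h1, h2⟩ | ⟨h1, h2⟩
  · left
    have hd : d v = 3 := by rw [d, h1]; norm_num
    refine ⟨hd, ?_⟩
    rw [m, ← Nat.cast_sum, h2, hd]; norm_num
  · right
    have hd : d v = 4 := by rw [d, h1]; norm_num
    refine ⟨hd, ?_⟩
    rw [m, ← Nat.cast_sum, h2, hd]; norm_num

theorem laplacian_spectral_radius_exceeds_bound (μ : ℝ)
    (hmem : μ ∈ spectrum ℝ (G.lapMatrix ℝ))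
    (hmax : ∀ ν ∈ spectrum ℝ (G.lapMatrix ℝ), ν ≤ μ) :
    (Finset.univ.filter fun p : _ × _ => G.Adj p.1 p.2).sup' (by decide)
      (fun p => 2 + Real.sqrt (2 * (m p.1 ^ 2 + m p.2 ^ 2) + (d p.1 - d p.2) ^ 2 - 4 * (d p.1 + d p.2) + 4)) < μ := by
  have hs : Real.sqrt 2 ^ 2 = 2 := Real.sq_sqrt (by norm_num)
  have h14 : (1.4 : ℝ) ≤ Real.sqrt 2 := by
    nlinarith [hs, Real.sqrt_nonneg 2]
  have hmu : 6 + Real.sqrt 2 ≤ μ := hmax _ spec_mem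
  rw [Finset.sup'_lt_iff]
  intro p _
  have harg : 2 * (m p.1 ^ 2 + m p.2 ^ 2) + (d p.1 - d p.2) ^ 2 - 4 * (d p.1 + d p.2) + 4 ≤ 113/4 := by
    rcases dm_vals p.1 with ⟨hd1, hm1⟩ | ⟨hd1, hm1⟩ <;>
      rcases dm_vals p.2 with ⟨hd2, hm2⟩ | ⟨hd2, hm2⟩ <;>
      rw [hd1, hm1, hd2, hm2] <;> norm_num
  have hle : Real.sqrt (2 * (m p.1 ^ 2 + m p.2 ^ 2) + (d p.1 - d p.2) ^ 2 - 4 * (d p.1 + d p.2) + 4)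
      ≤ Real.sqrt (113/4) := Real.sqrt_le_sqrt harg
  have hlt : Real.sqrt (113/4) < 4 + Real.sqrt 2 := by
    rw [Real.sqrt_lt' (by positivity)]
    nlinarith [hs, h14]
  linarith
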